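/- Let q be an odd prime. Then the integer polynomial 2·X_q(a) = 2^{2q}·∏_{k=0}^{q-1}(a + k + 1/2) - 2·binom(2q-1, q-1)·∏_{k=0}^{q-1}(a+k) (equivalently, 2^{q}·∏_{k=0}^{q-1}(2a+2k+1) - 2·binom(2q-1, q-1)·∏_{k=0}^{q-1}(a+k)) satisfies X_q(a) ≡ a^q - a (mod q); that is, reducing the coefficients of X_q modulo q yields the polynomial a^q - a over ℤ/qℤ. -/
import Mathlib

open Polynomial Finset

/-- The polynomial `X_n(a) = 2^{n-1} ∏_{k=0}^{n-1} (2a+2k+1) - C(2n-1, n-1) ∏_{k=0}^{n-1} (a+k)`,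
as a polynomial with integer coefficients. -/
noncomputable def XpolyInt (n : ℕ) : Polynomial ℤ :=
  C (2 ^ (n - 1)) * ∏ k ∈ Finset.range n, (2 * X + C (2 * (k : ℤ) + 1))
    - C (((2 * n - 1).choose (n - 1)) : ℤ) * ∏ k ∈ Finset.range n, (X + C (k : ℤ))

/-- Summing over `range q` of a `ZMod q`-valued function equals summing over all of `ZMod q`. -/
lemma prod_range_eq_prod_univ (q : ℕ) [NeZero q] {M : Type*} [CommMonoid M]
    (f : ZMod q → M) : ∏ k ∈ Finset.range q, f (k : ℕ) = ∏ a : ZMod q, f a := by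
  apply Finset.prod_bij' (fun k _ => ((k : ℕ) : ZMod q)) (fun a _ => a.val)
  · intro k hk; exact Finset.mem_univ _
  · intro a _; simpa using a.val_lt
  · intro k hk
    exact ZMod.val_cast_of_lt (Finset.mem_range.mp hk)
  · intro a _; exact ZMod.natCast_rightInverse a
  · intro k hk; rfl

lemma prod_univ_X_sub_C (q : ℕ) [Fact q.Prime] :
    ∏ a : ZMod q, (X - C a) = (X : (ZMod q)[X]) ^ q - X := by
  have hq1 : 1 < q := (Fact.out : q.Prime).one_lt
  have hm : ((X : (ZMod q)[X]) ^ q - X).Monic := by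
    apply monic_X_pow_sub
    simpa using (by exact_mod_cast hq1 : (1 : WithBot ℕ) < q)
  have hcard : Fintype.card (ZMod q) = q := ZMod.card q
  have hroots : ((X : (ZMod q)[X]) ^ q - X).roots = Finset.univ.val := by
    have := FiniteField.roots_X_pow_card_sub_X (ZMod q)
    rwa [hcard] at this
  have hdeg : ((X : (ZMod q)[X]) ^ q - X).natDegree = q :=
    FiniteField.X_pow_card_sub_X_natDegree_eq _ hq1
  have := prod_multiset_X_sub_C_of_monic_of_roots_card_eq hm
    (by rw [hroots, hdeg]; simpa using hcard)
  rw [hroots] at this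
  rw [← this]
  rfl

lemma prod_univ_X_add_C (q : ℕ) [Fact q.Prime] :
    ∏ a : ZMod q, (X + C a) = (X : (ZMod q)[X]) ^ q - X := by
  rw [← prod_univ_X_sub_C q]
  exact Fintype.prod_equiv (Equiv.neg (ZMod q)) _ _ (fun a => by simp [sub_eq_add_neg])

/-- For an odd prime `q`, `X_q(a) ≡ a^q - a (mod q)`. -/
theorem Xpoly_mod_prime (q : ℕ) (hq : q.Prime) (hodd : Odd q) :
    (XpolyInt q).map (Int.castRingHom (ZMod q)) = X ^ q - X := by
  haveI : Fact q.Prime := ⟨hq⟩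
  have hq1 : 1 < q := hq.one_lt
  have hq2 : q ≠ 2 := by rintro rfl; exact (Nat.not_odd_iff_even.mpr (by norm_num)) hodd
  have h2 : (2 : ZMod q) ≠ 0 := by
    have : ((2 : ℕ) : ZMod q) ≠ 0 := by
      rw [Ne, ZMod.natCast_eq_zero_iff]
      intro hdvd
      exact hq2 ((Nat.prime_dvd_prime_iff_eq hq Nat.prime_two).mp hdvd)
    simpa using this
  -- the binomial coefficient is 1 mod q
  have hchoose : (((2 * q - 1).choose (q - 1) : ℕ) : ZMod q) = 1 := by
    have hmod : (2 * q - 1) % q = q - 1 := by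
      have h : 2 * q - 1 = (q - 1) + q := by omega
      rw [h, Nat.add_mod_right, Nat.mod_eq_of_lt (by omega)]
    have hdiv : (2 * q - 1) / q = 1 := by
      have h : 2 * q - 1 = (q - 1) + q := by omega
      rw [h, Nat.add_div_right _ (by omega), Nat.div_eq_of_lt (by omega)]
    have hmod' : (q - 1) % q = q - 1 := Nat.mod_eq_of_lt (by omega)
    have hdiv' : (q - 1) / q = 0 := Nat.div_eq_of_lt (by omega)
    have hl := Choose.choose_modEq_choose_mod_mul_choose_div
      (n := 2 * q - 1) (k := q - 1) (p := q)
    rw [hmod, hdiv, hmod', hdiv', Nat.choose_self, Nat.choose_zero_right] at hl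
    have h := (ZMod.intCast_eq_intCast_iff _ _ _).mpr hl
    push_cast at h
    simpa using h
  -- Fermat
  have hferm : (2 : ZMod q) ^ (q - 1) = 1 := ZMod.pow_card_sub_one_eq_one h2
  -- the linear product
  have hlin : ∏ k ∈ Finset.range q, ((X : (ZMod q)[X]) + C ((k : ℕ) : ZMod q))
      = X ^ q - X := by
    rw [prod_range_eq_prod_univ q (fun a => X + C a), prod_univ_X_add_C]
  -- the odd product
  set c : ZMod q := (2 : ZMod q)⁻¹ with hc
  have h2c : (2 : ZMod q) * c = 1 := mul_inv_cancel₀ h2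
  have hshift : ∏ a : ZMod q, ((X : (ZMod q)[X]) + C (a + c)) = X ^ q - X := by
    rw [← prod_univ_X_add_C q]
    exact Fintype.prod_equiv (Equiv.addRight c) _ _ (fun a => rfl)
  have hodd2 : ∏ k ∈ Finset.range q, (2 * (X : (ZMod q)[X]) + C (2 * ((k : ℕ) : ZMod q) + 1))
      = C ((2 : ZMod q) ^ q) * (X ^ q - X) := by
    have hfac : ∀ k : ZMod q, 2 * (X : (ZMod q)[X]) + C (2 * k + 1)
        = C 2 * (X + C (k + c)) := by
      intro k
      have hC2 : (2 : (ZMod q)[X]) = C 2 := (map_ofNat C 2).symm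
      rw [hC2, mul_add, ← C_mul, mul_add, h2c]
    calc ∏ k ∈ Finset.range q, (2 * (X : (ZMod q)[X]) + C (2 * ((k : ℕ) : ZMod q) + 1))
        = ∏ k ∈ Finset.range q, (C (2 : ZMod q) * (X + C (((k : ℕ) : ZMod q) + c))) := by
          exact Finset.prod_congr rfl (fun k _ => hfac _)
      _ = C (2 : ZMod q) ^ q * ∏ k ∈ Finset.range q, ((X : (ZMod q)[X]) + C (((k : ℕ) : ZMod q) + c)) := by
          rw [Finset.prod_mul_distrib, Finset.prod_const, Finset.card_range]
      _ = C ((2 : ZMod q) ^ q) * (X ^ q - X) := by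
          rw [prod_range_eq_prod_univ q (fun a => X + C (a + c)), hshift, C_pow]
  -- put it together
  have key : (2 : ZMod q) ^ (q - 1) * 2 ^ q = 2 := by
    have hqe : q = (q - 1) + 1 := by omega
    have hpow : (2 : ZMod q) ^ q = 2 ^ (q - 1) * 2 := by
      rw [← pow_succ, ← hqe]
    rw [hpow, hferm]; ring
  rw [XpolyInt, Polynomial.map_sub, Polynomial.map_mul, Polynomial.map_mul,
    Polynomial.map_prod, Polynomial.map_prod]
  simp only [Polynomial.map_add, Polynomial.map_mul, Polynomial.map_ofNat, Polynomial.map_C,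
    Polynomial.map_X, Polynomial.map_intCast, Polynomial.map_natCast, Polynomial.map_pow,
    Polynomial.map_one, eq_intCast]
  push_cast
  simp only [C_add, C_mul, C_pow, C_1, C_eq_natCast, map_ofNat] at hodd2 hlin
  have hchooseP : (((2 * q - 1).choose (q - 1) : ℕ) : (ZMod q)[X]) = 1 := by
    rw [← C_eq_natCast, hchoose, C_1]
  have keyP : (2 : (ZMod q)[X]) ^ (q - 1) * 2 ^ q = 2 := by
    have h := congrArg C key
    simpa only [C_mul, C_pow, map_ofNat] using h
  rw [hodd2, hlin, hchooseP, ← mul_assoc, keyP]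
  ring
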